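/- arXiv:1701.08337 — 3 statements merged into one kernel-verified Lean document; each statement's English description precedes it below -/
import Mathlib

section
/- Let SNR_{11}, SNR_{31}, SNR_{32} > 0 satisfy SNR_{31} > SNR_{32}·√(SNR_{11}·SNR_{31}). Then for every fixed P₁ ∈ [0,1], the function P₃ ↦ (P₁·SNR_{11} + P₃·SNR_{31} + P₁·P₃·SNR_{11}·SNR_{32} + 2·√(SNR_{11}·SNR_{31}·P₁·P₃)) / (1 + P₃·SNR_{32}) is nondecreasing on (0, 1]. -/
/-- If `SNR₃₁ > SNR₃₂·√(SNR₁₁·SNR₃₁)`, then for each fixed `P₁ ∈ [0,1]` the function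
`P₃ ↦ (P₁·SNR₁₁ + P₃·SNR₃₁ + P₁·P₃·SNR₁₁·SNR₃₂ + 2·√(SNR₁₁·SNR₃₁·P₁·P₃)) / (1 + P₃·SNR₃₂)`
is nondecreasing on `(0, 1]`. -/
theorem stmt_3 (SNR11 SNR31 SNR32 : ℝ) (h11 : 0 < SNR11) (h31 : 0 < SNR31) (h32 : 0 < SNR32)
    (hcond : SNR31 > SNR32 * Real.sqrt (SNR11 * SNR31))
    (P1 : ℝ) (hP1 : P1 ∈ Set.Icc (0 : ℝ) 1) :
    MonotoneOn (fun P3 : ℝ =>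
        (P1 * SNR11 + P3 * SNR31 + P1 * P3 * SNR11 * SNR32 +
            2 * Real.sqrt (SNR11 * SNR31 * P1 * P3)) / (1 + P3 * SNR32))
      (Set.Ioc 0 1) := by
  obtain ⟨hP10, hP11⟩ := hP1
  intro a ha b hb hab
  obtain ⟨ha0, ha1⟩ := ha
  obtain ⟨hb0, hb1⟩ := hb
  have hda : (0:ℝ) < 1 + a * SNR32 := by positivity
  have hdb : (0:ℝ) < 1 + b * SNR32 := by positivity
  simp only
  rw [div_le_div_iff₀ hda hdb]
  have hsa : Real.sqrt (SNR11 * SNR31 * P1 * a)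
      = Real.sqrt (SNR11 * SNR31 * P1) * Real.sqrt a := Real.sqrt_mul (by positivity) a
  have hsb : Real.sqrt (SNR11 * SNR31 * P1 * b)
      = Real.sqrt (SNR11 * SNR31 * P1) * Real.sqrt b := Real.sqrt_mul (by positivity) b
  rw [hsa, hsb]
  set C := Real.sqrt (SNR11 * SNR31 * P1) with hC
  set K := Real.sqrt (SNR11 * SNR31) with hK
  set x := Real.sqrt a with hx
  set y := Real.sqrt b with hy
  have hx2 : x ^ 2 = a := Real.sq_sqrt ha0.le
  have hy2 : y ^ 2 = b := Real.sq_sqrt hb0.le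
  have hx0 : 0 < x := Real.sqrt_pos.mpr ha0
  have hy0 : 0 < y := Real.sqrt_pos.mpr hb0
  have hx1 : x ≤ 1 := by rw [hx, show (1:ℝ) = Real.sqrt 1 by simp]; exact Real.sqrt_le_sqrt ha1
  have hy1 : y ≤ 1 := by rw [hy, show (1:ℝ) = Real.sqrt 1 by simp]; exact Real.sqrt_le_sqrt hb1
  have hxy : x ≤ y := Real.sqrt_le_sqrt hab
  have hC0 : 0 ≤ C := Real.sqrt_nonneg _
  have hCK : C ≤ K := by
    apply Real.sqrt_le_sqrt
    nlinarith [mul_pos h11 h31]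
  have hK0 : 0 ≤ K := Real.sqrt_nonneg _
  -- key bracket inequality: (x+y)*SNR31 + 2*C ≥ 2*SNR32*C*x*y
  have hkey : 0 ≤ (x + y) * SNR31 + 2 * C - 2 * SNR32 * C * (x * y) := by
    have h1 : x + y - 2 * (x * y) = x * (1 - y) + y * (1 - x) := by ring
    have h2 : 2 * (x * y) ≤ x + y := by nlinarith
    have h3 : SNR32 * C ≤ SNR31 := by nlinarith
    nlinarith [mul_pos hx0 hy0, mul_nonneg (mul_nonneg hx0.le hy0.le) hC0]
  have hprod : 0 ≤ (y - x) * ((x + y) * SNR31 + 2 * C - 2 * SNR32 * C * (x * y)) :=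
    mul_nonneg (sub_nonneg.mpr hxy) hkey
  rw [← hx2, ← hy2]
  have hid : (P1 * SNR11 + y ^ 2 * SNR31 + P1 * y ^ 2 * SNR11 * SNR32 + 2 * (C * y)) *
        (1 + x ^ 2 * SNR32) -
      (P1 * SNR11 + x ^ 2 * SNR31 + P1 * x ^ 2 * SNR11 * SNR32 + 2 * (C * x)) *
        (1 + y ^ 2 * SNR32) =
      (y - x) * ((x + y) * SNR31 + 2 * C - 2 * SNR32 * C * (x * y)) := by ring
  linarith
end

section
/- Let α, β, γ, λ be nonnegative reals satisfying λ = α ≤ 1/2 and 1 + 2α < β ≤ γ + α. Then min{ max{2, 1 + min{β, γ}}, max{α + λ, β, 1 + β − α − λ} } = 1 + β − 2α, and also min{γ, max{(1−α)⁺, (β−α)⁺}} + (1−λ)⁺ = 1 + β − 2α, where x⁺ denotes max{x, 0}. -/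
/-- Under the weak interference conditions `λ = α ≤ 1/2` and `1 + 2α < β ≤ γ + α`, both the
GDoF upper bound `min{max{2, 1 + min{β,γ}}, max{α+λ, β, 1+β−α−λ}}` and the GDoF lower bound
`min{γ, max{(1−α)⁺, (β−α)⁺}} + (1−λ)⁺` equal `1 + β − 2α`. -/
theorem stmt_5 (α β γ lam : ℝ) (hα : 0 ≤ α) (hβ : 0 ≤ β) (hγ : 0 ≤ γ) (hlam : 0 ≤ lam)
    (h1 : lam = α) (h2 : α ≤ 1 / 2) (h3 : 1 + 2 * α < β) (h4 : β ≤ γ + α) :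
    min (max 2 (1 + min β γ)) (max (α + lam) (max β (1 + β - α - lam))) = 1 + β - 2 * α ∧
    min γ (max (max (1 - α) 0) (max (β - α) 0)) + max (1 - lam) 0 = 1 + β - 2 * α := by
  subst h1
  constructor <;> simp only [min_def, max_def] <;> split_ifs <;> linarith
end

section
/- Let A, B, N₁, N₂ > 0 be reals and m ≥ 0 a constant with N₂·B − A·m − A·N₁ > 0 (here B plays the role of SNR_{31} and A of SNR_{32}). Consider maximizing ∑_{i=1}^{2n} (1/2)·(log(m + B·dᵢ + N₁) − log(A·dᵢ + N₂)) over dᵢ ≥ 0 subject to ∑_{i=1}^{2n} dᵢ ≤ n. Then the unique maximizer is dᵢ = 1/2 for all i, and the maximum value equals n·(log(2m + B + 2N₁) − log(A + 2N₂)). -/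
open Finset

lemma aux_strict (A B N₁ N₂ m : ℝ) (hA : 0 < A) (hB : 0 < B) (hN₁ : 0 < N₁) (hN₂ : 0 < N₂)
    (hm : 0 ≤ m) (hpos : 0 < N₂ * B - A * m - A * N₁) {x : ℝ} (hx : 0 ≤ x) (hne : x ≠ 1/2) :
    Real.logb 2 (m + B * x + N₁) - Real.logb 2 (A * x + N₂) <
      Real.logb 2 (m + B * (1/2) + N₁) - Real.logb 2 (A * (1/2) + N₂) +
        (N₂*B - A*m - A*N₁) / ((m + B*(1/2) + N₁) * (A*(1/2) + N₂) * Real.log 2) * (x - 1/2) := by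
  set P : ℝ := m + B * x + N₁ with hPdef
  set Q : ℝ := A * x + N₂ with hQdef
  set P0 : ℝ := m + B * (1/2) + N₁ with hP0def
  set Q0 : ℝ := A * (1/2) + N₂ with hQ0def
  set K : ℝ := N₂*B - A*m - A*N₁ with hKdef
  have hP : 0 < P := by positivity
  have hQ : 0 < Q := by positivity
  have hP0 : 0 < P0 := by positivity
  have hQ0 : 0 < Q0 := by positivity
  have hL : 0 < Real.log 2 := Real.log_pos (by norm_num)
  have ht : (0:ℝ) < P * Q0 / (P0 * Q) := by positivity
  have htne : P * Q0 / (P0 * Q) ≠ 1 := by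
    rw [Ne, div_eq_one_iff_eq (by positivity : P0 * Q ≠ 0)]
    intro h
    have e : P * Q0 - P0 * Q = K * (x - 1/2) := by
      simp only [hPdef, hQdef, hP0def, hQ0def, hKdef]; ring
    have h0 : K * (x - 1/2) = 0 := by rw [← e, h, sub_self]
    rcases mul_eq_zero.1 h0 with h' | h'
    · exact absurd h' (ne_of_gt hpos)
    · exact hne (by linarith [sub_eq_zero.1 h'])
  have h1 : Real.log (P * Q0 / (P0 * Q)) < P * Q0 / (P0 * Q) - 1 :=
    Real.log_lt_sub_one_of_pos ht htne
  have h2 : P * Q0 / (P0 * Q) - 1 ≤ K * (x - 1/2) / (P0 * Q0) := by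
    rw [div_sub_one (by positivity), div_le_div_iff₀ (by positivity) (by positivity)]
    have key : K * (x - 1/2) * (P0 * Q) - (P * Q0 - P0 * Q) * (P0 * Q0) =
        K * A * P0 * (x - 1/2)^2 := by
      rw [hPdef, hQdef, hP0def, hQ0def, hKdef]; ring
    nlinarith [mul_nonneg (mul_nonneg (mul_nonneg hpos.le hA.le) hP0.le) (sq_nonneg (x - 1/2))]
  have hmain : Real.log P - Real.log Q - (Real.log P0 - Real.log Q0) < K * (x - 1/2) / (P0 * Q0) := by
    have e : Real.log (P * Q0 / (P0 * Q)) =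
        Real.log P + Real.log Q0 - (Real.log P0 + Real.log Q) := by
      rw [Real.log_div (by positivity) (by positivity), Real.log_mul hP.ne' hQ0.ne',
        Real.log_mul hP0.ne' hQ.ne']
    linarith [e ▸ h1]
  have hrw : Real.logb 2 P - Real.logb 2 Q -
      (Real.logb 2 P0 - Real.logb 2 Q0 + K / (P0 * Q0 * Real.log 2) * (x - 1/2)) =
      (Real.log P - Real.log Q - (Real.log P0 - Real.log Q0) - K * (x - 1/2) / (P0 * Q0)) /
        Real.log 2 := by
    simp only [Real.logb]; field_simp; ring
  have : (Real.log P - Real.log Q - (Real.log P0 - Real.log Q0) - K * (x - 1/2) / (P0 * Q0)) /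
      Real.log 2 < 0 := div_neg_of_neg_of_pos (by linarith) hL
  linarith [hrw ▸ this]

lemma aux_le (A B N₁ N₂ m : ℝ) (hA : 0 < A) (hB : 0 < B) (hN₁ : 0 < N₁) (hN₂ : 0 < N₂)
    (hm : 0 ≤ m) (hpos : 0 < N₂ * B - A * m - A * N₁) {x : ℝ} (hx : 0 ≤ x) :
    Real.logb 2 (m + B * x + N₁) - Real.logb 2 (A * x + N₂) ≤
      Real.logb 2 (m + B * (1/2) + N₁) - Real.logb 2 (A * (1/2) + N₂) +
        (N₂*B - A*m - A*N₁) / ((m + B*(1/2) + N₁) * (A*(1/2) + N₂) * Real.log 2) * (x - 1/2) := by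
  by_cases h : x = 1/2
  · subst h; simp
  · exact (aux_strict A B N₁ N₂ m hA hB hN₁ hN₂ hm hpos hx h).le

/-- KKT optimization of Appendix F: maximizing
`∑_{i=1}^{2n} (1/2)(log₂(m + B·dᵢ + N₁) − log₂(A·dᵢ + N₂))` over `dᵢ ≥ 0` with `∑ dᵢ ≤ n`,
under the numerator-positivity condition `N₂·B − A·m − A·N₁ > 0`, the unique maximizer is
`dᵢ = 1/2` for all `i`, with maximal value `n·(log₂(2m + B + 2N₁) − log₂(A + 2N₂))`. -/
theorem stmt_16 (A B N₁ N₂ m : ℝ) (hA : 0 < A) (hB : 0 < B) (hN₁ : 0 < N₁) (hN₂ : 0 < N₂)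
    (hm : 0 ≤ m) (hpos : 0 < N₂ * B - A * m - A * N₁) (n : ℕ) (hn : 0 < n) :
    (∀ d : Fin (2 * n) → ℝ, (∀ i, 0 ≤ d i) → (∑ i, d i ≤ (n : ℝ)) →
      (∑ i, (1 / 2 : ℝ) * (Real.logb 2 (m + B * d i + N₁) - Real.logb 2 (A * d i + N₂)) ≤
        ∑ _i : Fin (2 * n), (1 / 2 : ℝ) *
          (Real.logb 2 (m + B * (1 / 2) + N₁) - Real.logb 2 (A * (1 / 2) + N₂))) ∧
      ((∑ i, (1 / 2 : ℝ) * (Real.logb 2 (m + B * d i + N₁) - Real.logb 2 (A * d i + N₂)) =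
        ∑ _i : Fin (2 * n), (1 / 2 : ℝ) *
          (Real.logb 2 (m + B * (1 / 2) + N₁) - Real.logb 2 (A * (1 / 2) + N₂))) →
        ∀ i, d i = 1 / 2)) ∧
    (∑ _i : Fin (2 * n), (1 / 2 : ℝ) *
        (Real.logb 2 (m + B * (1 / 2) + N₁) - Real.logb 2 (A * (1 / 2) + N₂)) =
      (n : ℝ) * (Real.logb 2 (2 * m + B + 2 * N₁) - Real.logb 2 (A + 2 * N₂))) := by
  have hL : 0 < Real.log 2 := Real.log_pos (by norm_num)
  set c : ℝ := (N₂*B - A*m - A*N₁) / ((m + B*(1/2) + N₁) * (A*(1/2) + N₂) * Real.log 2) with hcdef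
  have hc : 0 < c := div_pos hpos (by positivity)
  set F0 : ℝ := (1 / 2 : ℝ) *
      (Real.logb 2 (m + B * (1 / 2) + N₁) - Real.logb 2 (A * (1 / 2) + N₂)) with hF0def
  have hcard : (Finset.univ : Finset (Fin (2 * n))).card = 2 * n := by simp
  have hsumc : ∑ _i : Fin (2 * n), F0 = (2 * n : ℝ) * F0 := by
    rw [Finset.sum_const, hcard, nsmul_eq_mul]; push_cast; ring
  constructor
  · intro d hd hsum
    have h1 : ∀ i ∈ (Finset.univ : Finset (Fin (2 * n))),
        (1 / 2 : ℝ) * (Real.logb 2 (m + B * d i + N₁) - Real.logb 2 (A * d i + N₂)) ≤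
          F0 + (c / 2) * (d i - 1 / 2) := by
      intro i _
      have := aux_le A B N₁ N₂ m hA hB hN₁ hN₂ hm hpos (hd i)
      rw [hF0def]; rw [hcdef]; linarith
    have h3 : ∑ i, (F0 + (c / 2) * (d i - 1 / 2)) =
        (2 * n : ℝ) * F0 + (c / 2) * ((∑ i, d i) - n) := by
      rw [Finset.sum_add_distrib, Finset.sum_const, hcard, nsmul_eq_mul, ← Finset.mul_sum,
        Finset.sum_sub_distrib, Finset.sum_const, hcard, nsmul_eq_mul]
      push_cast; ring
    have h4 : (c / 2) * ((∑ i, d i) - n) ≤ 0 := by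
      nlinarith [mul_nonneg hc.le (sub_nonneg.2 hsum)]
    constructor
    · have h2 := Finset.sum_le_sum h1
      rw [hsumc]; linarith
    · intro heq i
      by_contra hne
      have hstrict : (1 / 2 : ℝ) *
          (Real.logb 2 (m + B * d i + N₁) - Real.logb 2 (A * d i + N₂)) <
            F0 + (c / 2) * (d i - 1 / 2) := by
        have := aux_strict A B N₁ N₂ m hA hB hN₁ hN₂ hm hpos (hd i) hne
        rw [hF0def]; rw [hcdef]; linarith
      have h5 := Finset.sum_lt_sum h1 ⟨i, Finset.mem_univ i, hstrict⟩
      rw [hsumc] at heq; linarith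
  · have eP : Real.logb 2 (2 * m + B + 2 * N₁) =
        Real.logb 2 2 + Real.logb 2 (m + B * (1 / 2) + N₁) := by
      rw [show (2 * m + B + 2 * N₁ : ℝ) = 2 * (m + B * (1 / 2) + N₁) by ring,
        Real.logb_mul (by norm_num) (by positivity)]
    have eQ : Real.logb 2 (A + 2 * N₂) =
        Real.logb 2 2 + Real.logb 2 (A * (1 / 2) + N₂) := by
      rw [show (A + 2 * N₂ : ℝ) = 2 * (A * (1 / 2) + N₂) by ring,
        Real.logb_mul (by norm_num) (by positivity)]
    rw [hsumc, eP, eQ, hF0def]; ring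
end
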